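/- Let C be a TDD respecting a vtree T over a finite variable set X, let t be a node of T and g a t-node of C, and let τ1, τ2 ∈ 2^{X_t} be two models of f_g. Then f_C[τ1] = f_C[τ2] as Boolean functions over X∖X_t; call this common X_t-subfunction sub_g. Moreover, for every model τ of f_C whose (unique) certificate contains g, the restriction of τ to X∖X_t is a model of sub_g. -/

import Mathlib

/-- A vtree: a rooted binary tree whose leaves are labeled by variables. -/
inductive Vtree (V : Type) where
  | leaf : V → Vtree V
  | node : Vtree V → Vtree V → Vtree V

namespace Vtree

variable {V : Type} [DecidableEq V]

/-- The set of variables labeling the leaves of a vtree. -/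
def vars : Vtree V → Finset V
  | leaf x => {x}
  | node l r => l.vars ∪ r.vars

/-- A vtree is proper when its leaves carry pairwise distinct variables,
so that the leaves are in one-to-one correspondence with `vars`. -/
def Proper : Vtree V → Prop
  | leaf _ => True
  | node l r => l.Proper ∧ r.Proper ∧ Disjoint l.vars r.vars

/-- `T.IsNode t` : `t` is (the subtree rooted at) a node of `T`. -/
def IsNode : Vtree V → Vtree V → Prop
  | leaf x, t => t = leaf x
  | node l r, t => t = node l r ∨ l.IsNode t ∨ r.IsNode t

/-- Remove every leaf whose variable is in `Y`, suppressing unary nodes.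
Returns `none` if no leaf survives. -/
def restrict (Y : Finset V) : Vtree V → Option (Vtree V)
  | leaf x => if x ∈ Y then none else some (leaf x)
  | node l r =>
    match l.restrict Y, r.restrict Y with
    | none, o => o
    | some l', none => some l'
    | some l', some r' => some (node l' r')

/-- The vtree `T ∖ x`. -/
def remove (x : V) (T : Vtree V) : Option (Vtree V) := T.restrict {x}

/-- A vtree is linear when every internal node has a leaf child. -/
def Linear : Vtree V → Prop
  | leaf _ => True
  | node l r => ((∃ x, l = leaf x) ∨ (∃ x, r = leaf x)) ∧ l.Linear ∧ r.Linear

/-- The variable order induced by a linear vtree. -/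
def order : Vtree V → List V
  | leaf x => [x]
  | node (leaf x) r => x :: r.order
  | node l (leaf x) => x :: l.order
  | node l r => l.order ++ r.order

end Vtree

/-- Labels of leaf-layer nodes of a TDD: the positive literal, the negative
literal, and the constants 1 and 0. -/
inductive TLab where
  | pos | neg | one | zero
deriving DecidableEq

/-- Disjunction of two leaf labels (used when contracting twin leaf nodes). -/
def TLab.lor : TLab → TLab → TLab
  | .zero, a => a
  | a, .zero => a
  | .one, _ => .one
  | _, .one => .one
  | .pos, .pos => .pos
  | .neg, .neg => .neg
  | .pos, .neg => .one
  | .neg, .pos => .one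

/-- A (non-deterministic) tree decision diagram structured along a vtree:
one layer of nodes (identified by natural numbers) per vtree node; leaf-layer
nodes carry labels, internal-layer nodes carry their sets of input pairs. -/
inductive NTDD (V : Type) where
  | leaf (x : V) (ns : Finset ℕ) (lab : ℕ → TLab)
  | node (l r : NTDD V) (ns : Finset ℕ) (E : ℕ → Finset (ℕ × ℕ))

namespace NTDD

variable {V : Type}

/-- The vtree that an nTDD is structured along. -/
def shape : NTDD V → Vtree V
  | leaf x _ _ => .leaf x
  | node l r _ _ => .node l.shape r.shape

/-- The set of nodes of the top (root) layer. -/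
def nodes : NTDD V → Finset ℕ
  | leaf _ ns _ => ns
  | node _ _ ns _ => ns

/-- The size of an nTDD: the total number of input pairs. -/
def size : NTDD V → ℕ
  | leaf _ _ _ => 0
  | node l r ns E => l.size + r.size + ∑ g ∈ ns, (E g).card

/-- The width of an nTDD: the maximal cardinality of a layer. -/
def width : NTDD V → ℕ
  | leaf _ ns _ => ns.card
  | node l r ns _ => max ns.card (max l.width r.width)

/-- `C.sat g τ` : (the restriction of) the assignment `τ` is a model of the
function `f_g` computed by the top-layer node `g` of `C`. -/
def sat : NTDD V → ℕ → (V → Bool) → Prop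
  | leaf x _ lab, g, τ =>
    match lab g with
    | .pos => τ x = true
    | .neg => τ x = false
    | .one => True
    | .zero => False
  | node l r _ E, g, τ => ∃ p ∈ E g, l.sat p.1 τ ∧ r.sat p.2 τ

/-- Well-formedness: input pairs of top-layer nodes reference nodes of the
children layers. -/
def WF : NTDD V → Prop
  | leaf _ _ _ => True
  | node l r ns E => l.WF ∧ r.WF ∧ ∀ g ∈ ns, ∀ p ∈ E g, p.1 ∈ l.nodes ∧ p.2 ∈ r.nodes

/-- Determinism, turning an nTDD into a TDD: at each leaf layer at most one
node labeled by each of `x`, `¬x`, `1`, and if a node is labeled `1` then all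
other nodes are labeled `0`; at each internal layer every pair is the input of
at most one node. -/
def Det : NTDD V → Prop
  | leaf _ ns lab =>
      (∀ g ∈ ns, ∀ g' ∈ ns, lab g = TLab.pos → lab g' = TLab.pos → g = g') ∧
      (∀ g ∈ ns, ∀ g' ∈ ns, lab g = TLab.neg → lab g' = TLab.neg → g = g') ∧
      (∀ g ∈ ns, ∀ g' ∈ ns, lab g = TLab.one → lab g' = TLab.one → g = g') ∧
      (∀ g ∈ ns, lab g = TLab.one → ∀ g' ∈ ns, g' ≠ g → lab g' = TLab.zero)
  | node l r ns E => l.Det ∧ r.Det ∧ ∀ g ∈ ns, ∀ g' ∈ ns, g ≠ g' → Disjoint (E g) (E g')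

/-- `C.Subdiagram D` : `D` is the sub-diagram of `C` sitting at some node of
the underlying vtree (including `C` itself). -/
def Subdiagram : NTDD V → NTDD V → Prop
  | leaf x ns lab, D => D = leaf x ns lab
  | node l r ns E, D => D = node l r ns E ∨ l.Subdiagram D ∨ r.Subdiagram D

/-- A TDD is full if, at every layer, every assignment is a model of some node
of that layer. -/
def Full (C : NTDD V) : Prop :=
  ∀ D : NTDD V, C.Subdiagram D → ∀ τ : V → Bool, ∃ g ∈ D.nodes, D.sat g τ

end NTDD

/-- A choice of one node id per vtree node, mirroring the vtree: the data of a
certificate. -/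
inductive IdTree where
  | leaf (g : ℕ)
  | node (g : ℕ) (l r : IdTree)

/-- The id chosen at the root. -/
def IdTree.root : IdTree → ℕ
  | .leaf g => g
  | .node g _ _ => g

namespace NTDD

variable {V : Type}

/-- `C.IsCert P τ` : the choice `P` of one node per layer is a certificate for
`τ` in `C` (except for the root condition `P.root = out`, stated separately):
at a leaf labeled `x` the chosen node is labeled `1` or by a literal satisfied
by `τ`, and at an internal node the chosen pair of children nodes is an input
of the chosen node. -/
def IsCert : NTDD V → IdTree → (V → Bool) → Prop
  | leaf x ns lab, IdTree.leaf g, τ =>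
      g ∈ ns ∧ (lab g = TLab.one ∨ (lab g = TLab.pos ∧ τ x = true) ∨
        (lab g = TLab.neg ∧ τ x = false))
  | node l r ns E, IdTree.node g pl pr, τ =>
      g ∈ ns ∧ (pl.root, pr.root) ∈ E g ∧ l.IsCert pl τ ∧ r.IsCert pr τ
  | _, _, _ => False

/-- `SubPair C P D Q` : `D` is the sub-diagram of `C` at some vtree node `t`,
and `Q` is the corresponding part of the certificate data `P` (so `Q.root` is
the node that `P` chooses at `t`). -/
def SubPair : NTDD V → IdTree → NTDD V → IdTree → Prop
  | leaf x ns lab, P, D, Q => D = leaf x ns lab ∧ Q = P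
  | node l r ns E, P, D, Q =>
      (D = node l r ns E ∧ Q = P) ∨
      (match P with
       | IdTree.node _ pl pr => l.SubPair pl D Q ∨ r.SubPair pr D Q
       | _ => False)

/-- Contract the two top-layer nodes `g1, g1'` into the fresh node `v`. -/
def contractLayer (g1 g1' v : ℕ) : NTDD V → NTDD V
  | leaf x ns lab =>
      leaf x (insert v ((ns.erase g1).erase g1'))
        (fun g => if g = v then (lab g1).lor (lab g1') else lab g)
  | node l r ns E =>
      node l r (insert v ((ns.erase g1).erase g1'))
        (fun g => if g = v then E g1 ∪ E g1' else E g)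

/-- Twin contraction of nodes `g1, g1'` of the left child layer into `v`:
they are merged in the left layer, and every input pair `(g1, g2)` or
`(g1', g2)` of a top-layer node is replaced by `(v, g2)`. -/
def contractAtL (g1 g1' v : ℕ) : NTDD V → NTDD V
  | node l r ns E =>
      node (l.contractLayer g1 g1' v) r ns
        (fun g => (E g).image (fun p => if p.1 = g1 ∨ p.1 = g1' then (v, p.2) else p))
  | C => C

/-- Twin contraction of nodes `g1, g1'` of the right child layer into `v`. -/
def contractAtR (g1 g1' v : ℕ) : NTDD V → NTDD V
  | node l r ns E =>
      node l (r.contractLayer g1 g1' v) ns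
        (fun g => (E g).image (fun p => if p.2 = g1 ∨ p.2 = g1' then (p.1, v) else p))
  | C => C

open Classical in
/-- Replace the sub-diagram `D` of `C` by `D'` (in a proper vtree, sub-diagrams
at distinct positions are distinct, so this is unambiguous). -/
noncomputable def replace : NTDD V → NTDD V → NTDD V → NTDD V
  | leaf x ns lab, D, D' => if leaf x ns lab = D then D' else leaf x ns lab
  | node l r ns E, D, D' =>
      if node l r ns E = D then D'
      else node (l.replace D D') (r.replace D D') ns E

/-- `g1` and `g1'` are twins of the left child layer: they have the same
siblings with respect to every top-layer node. -/
def TwinsL (g1 g1' : ℕ) : NTDD V → Prop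
  | node l _ ns E => g1 ∈ l.nodes ∧ g1' ∈ l.nodes ∧ g1 ≠ g1' ∧
      ∀ g ∈ ns, ∀ g2 : ℕ, ((g1, g2) ∈ E g ↔ (g1', g2) ∈ E g)
  | _ => False

/-- `g1` and `g1'` are twins of the right child layer. -/
def TwinsR (g1 g1' : ℕ) : NTDD V → Prop
  | node _ r ns E => g1 ∈ r.nodes ∧ g1' ∈ r.nodes ∧ g1 ≠ g1' ∧
      ∀ g ∈ ns, ∀ g2 : ℕ, ((g2, g1) ∈ E g ↔ (g2, g1') ∈ E g)
  | _ => False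

/-- The node set of the left child layer. -/
def leftNodes : NTDD V → Finset ℕ
  | node l _ _ _ => l.nodes
  | _ => ∅

/-- The node set of the right child layer. -/
def rightNodes : NTDD V → Finset ℕ
  | node _ r _ _ => r.nodes
  | _ => ∅

end NTDD

/-- The number of distinct non-trivial `Y`-subfunctions of the Boolean
function `f` : functions of the form `σ ↦ f (Y.piecewise τ σ)` for some
`τ`, having at least one model. -/
noncomputable def subCount {V : Type} [DecidableEq V] (f : (V → Bool) → Prop) (Y : Finset V) : ℕ :=
  Nat.card {h : (V → Bool) → Prop |
    (∃ τ : V → Bool, h = fun σ => f (Y.piecewise τ σ)) ∧ ∃ σ : V → Bool, h σ}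

/-- The number of distinct `Y`-subfunctions of `f` (trivial ones included). -/
noncomputable def subCountAll {V : Type} [DecidableEq V] (f : (V → Bool) → Prop) (Y : Finset V) : ℕ :=
  Nat.card {h : (V → Bool) → Prop |
    ∃ τ : V → Bool, h = fun σ => f (Y.piecewise τ σ)}

/-!
In a well-formed deterministic layer at most one node accepts a given assignment, so any two
models of `g` select the same accepting nodes of the layer of `g`: namely `g` alone. The layers
above see the variables of the sub-diagram at `g` only through which of its nodes accept (the
other variables sit in disjoint subtrees), so swapping one model of `g` for another does not
change the models of `out`. A certificate through `g` makes its own restriction a model of `g`,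
which gives the second part.
-/

namespace NTDD

section

variable {V : Type}

theorem eq_of_sat_of_sat {C : NTDD V} (hWF : C.WF) (hDet : C.Det) {τ : V → Bool} {g g' : ℕ}
    (hg : g ∈ C.nodes) (hg' : g' ∈ C.nodes) (hs : C.sat g τ) (hs' : C.sat g' τ) : g = g' := by
  induction C generalizing g g' with
  | leaf x ns lab =>
    obtain ⟨hpos, hneg, hone, hzero⟩ := hDet
    simp only [nodes] at hg hg'
    cases hl : lab g <;> cases hl' : lab g' <;> simp only [sat, hl, hl'] at hs hs'
    · exact hpos g hg g' hg' hl hl'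
    · simp [hs] at hs'
    · by_contra hne
      simpa [hl] using hzero g' hg' hl' g hg hne
    · simp [hs] at hs'
    · exact hneg g hg g' hg' hl hl'
    · by_contra hne
      simpa [hl] using hzero g' hg' hl' g hg hne
    · by_contra hne
      simpa [hl'] using hzero g hg hl g' hg' (Ne.symm hne)
    · by_contra hne
      simpa [hl'] using hzero g hg hl g' hg' (Ne.symm hne)
    · exact hone g hg g' hg' hl hl'
  | node l r ns E ihl ihr =>
    obtain ⟨wl, wr, wE⟩ := hWF
    obtain ⟨dl, dr, dE⟩ := hDet
    obtain ⟨p, hp, hp1, hp2⟩ := hs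
    obtain ⟨p', hp', hp1', hp2'⟩ := hs'
    have hpp : p = p' := Prod.ext (ihl wl dl (wE g hg p hp).1 (wE g' hg' p' hp').1 hp1 hp1')
      (ihr wr dr (wE g hg p hp).2 (wE g' hg' p' hp').2 hp2 hp2')
    by_contra hne
    exact Finset.disjoint_left.mp (dE g hg g' hg' hne) hp (hpp ▸ hp')

theorem Subdiagram.wf {C D : NTDD V} (hD : C.Subdiagram D) (hC : C.WF) : D.WF := by
  induction C with
  | leaf => rw [Subdiagram] at hD; exact hD ▸ hC
  | node l r ns E ihl ihr =>
    rcases hD with rfl | hD | hD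
    exacts [hC, ihl hD hC.1, ihr hD hC.2.1]

theorem Subdiagram.det {C D : NTDD V} (hD : C.Subdiagram D) (hC : C.Det) : D.Det := by
  induction C with
  | leaf => rw [Subdiagram] at hD; exact hD ▸ hC
  | node l r ns E ihl ihr =>
    rcases hD with rfl | hD | hD
    exacts [hC, ihl hD hC.1, ihr hD hC.2.1]

theorem IsCert.sat_root {C : NTDD V} {P : IdTree} {τ : V → Bool} (h : C.IsCert P τ) :
    C.sat P.root τ := by
  induction C generalizing P with
  | leaf x ns lab =>
    cases P with
    | leaf g => rcases h.2 with h | ⟨h, hx⟩ | ⟨h, hx⟩ <;> simp [sat, IdTree.root, *]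
    | node => exact h.elim
  | node l r ns E ihl ihr =>
    cases P with
    | leaf => exact h.elim
    | node g pl pr => exact ⟨(pl.root, pr.root), h.2.1, ihl h.2.2.1, ihr h.2.2.2⟩

theorem IsCert.of_subPair {C D : NTDD V} {P Q : IdTree} {τ : V → Bool} (hc : C.IsCert P τ)
    (hsp : C.SubPair P D Q) : D.IsCert Q τ := by
  induction C generalizing P with
  | leaf =>
    obtain ⟨rfl, rfl⟩ := hsp
    exact hc
  | node l r ns E ihl ihr =>
    rcases hsp with ⟨rfl, rfl⟩ | hsp
    · exact hc
    · cases P with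
      | leaf => exact hsp.elim
      | node g pl pr => exact hsp.elim (ihl hc.2.2.1) (ihr hc.2.2.2)

end

variable {V : Type} [DecidableEq V]

theorem sat_congr {C : NTDD V} {g : ℕ} {τ τ' : V → Bool} (h : Set.EqOn τ τ' C.shape.vars) :
    C.sat g τ ↔ C.sat g τ' := by
  induction C generalizing g with
  | leaf x ns lab =>
    have hx : τ x = τ' x := h (by simp [shape, Vtree.vars])
    cases lab g <;> simp [sat, hx]
  | node l r ns E ihl ihr =>
    have hl : Set.EqOn τ τ' l.shape.vars := h.mono (by simp [shape, Vtree.vars])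
    have hr : Set.EqOn τ τ' r.shape.vars := h.mono (by simp [shape, Vtree.vars])
    simp only [sat, ihl hl, ihr hr]

theorem Subdiagram.vars_subset {C D : NTDD V} (hD : C.Subdiagram D) :
    D.shape.vars ⊆ C.shape.vars := by
  induction C with
  | leaf => rw [Subdiagram] at hD; rw [hD]
  | node l r ns E ihl ihr =>
    rcases hD with rfl | hD | hD
    · exact subset_rfl
    · exact (ihl hD).trans Finset.subset_union_left
    · exact (ihr hD).trans Finset.subset_union_right

theorem Subdiagram.sat_of_sat {C D : NTDD V} (hD : C.Subdiagram D) (hP : C.shape.Proper)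
    (hWF : C.WF) {ρ ρ' : V → Bool} (hρ : ∀ x ∉ D.shape.vars, ρ x = ρ' x)
    (hsat : ∀ h ∈ D.nodes, D.sat h ρ → D.sat h ρ') :
    ∀ g ∈ C.nodes, C.sat g ρ → C.sat g ρ' := by
  induction C with
  | leaf => rw [Subdiagram] at hD; exact hD ▸ hsat
  | node l r ns E ihl ihr =>
    obtain ⟨pl, pr, hdisj⟩ := hP
    obtain ⟨wl, wr, wE⟩ := hWF
    rintro g hg ⟨p, hp, hp1, hp2⟩
    rcases hD with rfl | hD | hD
    · exact hsat g hg ⟨p, hp, hp1, hp2⟩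
    · have hr : Set.EqOn ρ ρ' r.shape.vars := fun x hx =>
        hρ x fun hxD => Finset.disjoint_left.mp hdisj (hD.vars_subset hxD) hx
      exact ⟨p, hp, ihl hD pl wl p.1 (wE g hg p hp).1 hp1, (sat_congr hr).1 hp2⟩
    · have hl : Set.EqOn ρ ρ' l.shape.vars := fun x hx =>
        hρ x fun hxD => Finset.disjoint_right.mp hdisj (hD.vars_subset hxD) hx
      exact ⟨p, hp, (sat_congr hl).1 hp1, ihr hD pr wr p.2 (wE g hg p hp).2 hp2⟩

theorem Subdiagram.sat_piecewise_of_sat {C D : NTDD V} (hD : C.Subdiagram D)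
    (hP : C.shape.Proper) (hWF : C.WF) (hDet : C.Det) {g : ℕ} (hg : g ∈ D.nodes)
    {τ₁ τ₂ : V → Bool} (h₁ : D.sat g τ₁) (h₂ : D.sat g τ₂) (σ : V → Bool) {out : ℕ}
    (hout : out ∈ C.nodes) :
    C.sat out (D.shape.vars.piecewise τ₁ σ) → C.sat out (D.shape.vars.piecewise τ₂ σ) := by
  have hpw : ∀ τ, Set.EqOn (D.shape.vars.piecewise τ σ) τ D.shape.vars := fun τ _ hx =>
    Finset.piecewise_eq_of_mem _ _ _ hx
  refine hD.sat_of_sat hP hWF (fun x hx => by simp [Finset.piecewise_eq_of_notMem _ _ _ hx])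
    ?_ out hout
  intro h hh hs
  rw [sat_congr (hpw τ₁)] at hs
  rw [sat_congr (hpw τ₂), eq_of_sat_of_sat (hD.wf hWF) (hD.det hDet) hh hg hs h₁]
  exact h₂

end NTDD

theorem stmt9_general {V : Type} [DecidableEq V] (T : Vtree V)
    (hTp : T.Proper)
    (C : NTDD V) (out : ℕ) (hsh : C.shape = T) (hWF : C.WF) (hDet : C.Det)
    (hout : out ∈ C.nodes)
    (D : NTDD V) (hD : C.Subdiagram D) (g : ℕ) (hg : g ∈ D.nodes)
    (τ1 τ2 : V → Bool) (h1 : D.sat g τ1) (h2 : D.sat g τ2) :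
    (∀ σ : V → Bool,
      (C.sat out ((D.shape.vars).piecewise τ1 σ) ↔
        C.sat out ((D.shape.vars).piecewise τ2 σ))) ∧
    (∀ (τ : V → Bool) (P Q : IdTree),
      P.root = out → C.IsCert P τ → C.SubPair P D Q → Q.root = g →
      C.sat out ((D.shape.vars).piecewise τ1 τ)) := by
  have hP : C.shape.Proper := hsh ▸ hTp
  have hsub {τ τ' : V → Bool} (h : D.sat g τ) (h' : D.sat g τ') (σ : V → Bool) :=
    hD.sat_piecewise_of_sat hP hWF hDet hg h h' σ hout
  refine ⟨fun σ => ⟨hsub h1 h2 σ, hsub h2 h1 σ⟩, ?_⟩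
  rintro τ P Q rfl hcert hPQ rfl
  have hτ : C.sat P.root (D.shape.vars.piecewise τ τ) := by
    rw [Finset.piecewise_same]
    exact hcert.sat_root
  exact hsub (hcert.of_subPair hPQ).sat_root h1 τ hτ

/-- Let `C` be a TDD respecting a vtree `T` over `X`, let
`g` be a `t`-node of `C` (with `D` the sub-diagram of `C` at `t`), and let
`τ1, τ2` be two models of `f_g`. Then `f_C[τ1] = f_C[τ2]` as Boolean
functions over `X ∖ X_t` (this common subfunction is `sub_g`); moreover, for
every model `τ` of `f_C` whose certificate chooses `g` at `t`, the
restriction of `τ` to `X ∖ X_t` is a model of `sub_g`. -/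
theorem stmt9 {V : Type} [DecidableEq V] (X : Finset V) (T : Vtree V)
    (hTp : T.Proper) (hTX : T.vars = X)
    (C : NTDD V) (out : ℕ) (hsh : C.shape = T) (hWF : C.WF) (hDet : C.Det)
    (hout : out ∈ C.nodes)
    (D : NTDD V) (hD : C.Subdiagram D) (g : ℕ) (hg : g ∈ D.nodes)
    (τ1 τ2 : V → Bool) (h1 : D.sat g τ1) (h2 : D.sat g τ2) :
    (∀ σ : V → Bool,
      (C.sat out ((D.shape.vars).piecewise τ1 σ) ↔
        C.sat out ((D.shape.vars).piecewise τ2 σ))) ∧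
    (∀ (τ : V → Bool) (P Q : IdTree),
      P.root = out → C.IsCert P τ → C.SubPair P D Q → Q.root = g →
      C.sat out ((D.shape.vars).piecewise τ1 τ)) :=
  stmt9_general T hTp C out hsh hWF hDet hout D hD g hg τ1 τ2 h1 h2
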